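/- In the Euclidean circle-packing triangle with radii r₁, r₂, r₃ > 0 and nonobtuse intersection angles Θ₁, Θ₂, Θ₃ ∈ [0, π/2], the angle θ₁ at the center of the first circle, defined by cos θ₁ = (ℓ₃² + ℓ₂² − ℓ₁²)/(2ℓ₃ℓ₂) with ℓ_i as the opposite side lengths, is strictly decreasing in r₁: ∂θ₁/∂r₁ < 0. -/

import Mathlib

open Real

/-- Euclidean distance between the centers of two circles of radii `a`, `b`
meeting at angle `θ`. -/
noncomputable def circleEdgeLength (a b θ : ℝ) : ℝ :=
  Real.sqrt (a ^ 2 + b ^ 2 + 2 * a * b * Real.cos θ)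

/-- The angle at the center of the first circle in the circle-packing triangle
with radii `r₁ r₂ r₃` and weights `Θ₁ Θ₂ Θ₃` (where `Θᵢ` is the weight of the
edge opposite to vertex `i`), by the law of cosines. -/
noncomputable def circleAngle (Θ₁ Θ₂ Θ₃ r₁ r₂ r₃ : ℝ) : ℝ :=
  Real.arccos ((circleEdgeLength r₁ r₃ Θ₂ ^ 2 + circleEdgeLength r₁ r₂ Θ₃ ^ 2 -
      circleEdgeLength r₂ r₃ Θ₁ ^ 2) /
    (2 * circleEdgeLength r₁ r₃ Θ₂ * circleEdgeLength r₁ r₂ Θ₃))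

/-! With `B`, `C` the squared sides at the first vertex and `A` the opposite one, the law of
cosines gives `cos θ₁ = g := (B + C - A) / (2 √(B C))`, and only `B`, `C` depend on `r₁`. Hence
`θ₁' = -g' / sin θ₁`, where `g'` has the sign of `B' C (B - C + A) + B C' (C - B + A)`; the
triangle is nondegenerate because `4 B C - (B + C - A)² > 0`. For nonobtuse `Θᵢ` both
polynomials in the radii and the `cos Θᵢ` expand into sums of nonnegative terms, one of them
positive. -/

open Set

theorem hasDerivAt_lawOfCosines {B C : ℝ → ℝ} {B' C' x : ℝ} (A : ℝ)
    (hB : HasDerivAt B B' x) (hC : HasDerivAt C C' x) (hB₀ : 0 < B x) (hC₀ : 0 < C x) :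
    HasDerivAt (fun s => (B s + C s - A) / (2 * √(B s) * √(C s)))
      ((B' * C x * (B x - C x + A) + B x * C' * (C x - B x + A)) /
        (4 * (B x * C x) * √(B x * C x))) x := by
  have hb := sqrt_pos.2 hB₀
  have hc := sqrt_pos.2 hC₀
  have hden : HasDerivAt (fun s => 2 * √(B s) * √(C s))
      (2 * (B' / (2 * √(B x))) * √(C x) + 2 * √(B x) * (C' / (2 * √(C x)))) x :=
    ((hB.sqrt hB₀.ne').const_mul 2).mul (hC.sqrt hC₀.ne')
  refine (((hB.add hC).sub_const A).div hden (by positivity)).congr_deriv ?_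
  rw [Pi.add_apply, sqrt_mul hB₀.le]
  field_simp
  rw [sq_sqrt hB₀.le, sq_sqrt hC₀.le]
  ring

theorem lawOfCosines_mem_Ioo {A B C : ℝ} (hB : 0 < B) (hC : 0 < C)
    (h : (B + C - A) ^ 2 < 4 * B * C) : (B + C - A) / (2 * √B * √C) ∈ Ioo (-1) 1 := by
  have hD : 0 < 2 * √B * √C := by positivity
  have hD2 : (2 * √B * √C) ^ 2 = 4 * B * C := by
    rw [mul_pow, mul_pow, sq_sqrt hB.le, sq_sqrt hC.le]; ring
  rw [mem_Ioo, ← abs_lt, abs_div, abs_of_pos hD, div_lt_one hD, ← sq_lt_sq₀ (abs_nonneg _) hD.le,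
    sq_abs, hD2]
  exact h

theorem deriv_arccos_comp_neg {f : ℝ → ℝ} {f' x : ℝ} (hf : HasDerivAt f f' x) (hf' : 0 < f')
    (hx : f x ∈ Ioo (-1) 1) : deriv (fun s => arccos (f s)) x < 0 := by
  have h := ((hasDerivAt_arccos hx.1.ne' hx.2.ne).comp x hf).deriv
  simp only [Function.comp_def] at h
  have hx₁ : 0 < 1 - f x ^ 2 := by nlinarith [hx.1, hx.2]
  rw [h, neg_mul]
  exact neg_neg_of_pos (by positivity)

theorem deriv_arccos_lawOfCosines_neg {B C : ℝ → ℝ} {B' C' x : ℝ} (A : ℝ)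
    (hB : HasDerivAt B B' x) (hC : HasDerivAt C C' x) (hB₀ : 0 < B x) (hC₀ : 0 < C x)
    (hnum : 0 < B' * C x * (B x - C x + A) + B x * C' * (C x - B x + A))
    (htri : (B x + C x - A) ^ 2 < 4 * B x * C x) :
    deriv (fun s => arccos ((B s + C s - A) / (2 * √(B s) * √(C s)))) x < 0 :=
  deriv_arccos_comp_neg (hasDerivAt_lawOfCosines A hB hC hB₀ hC₀) (by positivity)
    (lawOfCosines_mem_Ioo hB₀ hC₀ htri)

noncomputable def circleEdgeLengthSq (a b θ : ℝ) : ℝ :=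
  a ^ 2 + b ^ 2 + 2 * a * b * cos θ

theorem circleEdgeLengthSq_pos {a b θ : ℝ} (ha : 0 < a) (hb : 0 < b) (hθ : -1 < cos θ) :
    0 < circleEdgeLengthSq a b θ := by
  unfold circleEdgeLengthSq
  nlinarith [sq_nonneg (a - b), mul_pos ha hb]

theorem sq_circleEdgeLength (a b θ : ℝ) :
    circleEdgeLength a b θ ^ 2 = circleEdgeLengthSq a b θ := by
  refine sq_sqrt ?_
  nlinarith [sq_nonneg (a + b * cos θ), sq_nonneg (b * sin θ), sin_sq_add_cos_sq θ]

theorem hasDerivAt_circleEdgeLengthSq (a b θ : ℝ) :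
    HasDerivAt (fun s => circleEdgeLengthSq s b θ) (2 * a + 2 * b * cos θ) a :=
  ((((hasDerivAt_id' a).pow 2).add_const (b ^ 2)).add
    ((((hasDerivAt_id' a).const_mul 2).mul_const b).mul_const (cos θ))).congr_deriv (by simp)

theorem mul_sin_sq_add_mul_cos_pos {a b θ : ℝ} (ha : 0 < a) (hb : 0 < b) (hθ : 0 ≤ cos θ) :
    0 < a * sin θ ^ 2 + b * cos θ := by
  rcases hθ.eq_or_lt with h | h
  · rw [sin_sq, ← h]; simpa
  · positivity

section CirclePackingTriangle

variable {r₁ r₂ r₃ Θ₁ Θ₂ Θ₃ : ℝ}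

theorem circleEdgeLengthSq_add_sub_sq_lt (hr₁ : 0 < r₁) (hr₂ : 0 < r₂) (hr₃ : 0 < r₃)
    (hΘ₁ : 0 ≤ cos Θ₁) (hΘ₂ : 0 ≤ cos Θ₂) (hΘ₃ : 0 ≤ cos Θ₃) :
    (circleEdgeLengthSq r₁ r₃ Θ₂ + circleEdgeLengthSq r₁ r₂ Θ₃ - circleEdgeLengthSq r₂ r₃ Θ₁) ^ 2
      < 4 * circleEdgeLengthSq r₁ r₃ Θ₂ * circleEdgeLengthSq r₁ r₂ Θ₃ := by
  have hstrict := mul_sin_sq_add_mul_cos_pos (a := r₁ ^ 2 * r₂ ^ 2) (b := 2 * r₁ * r₂ * r₃ ^ 2)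
    (by positivity) (by positivity) hΘ₃
  have hpos : 0 < 4 * (r₂ ^ 2 * r₃ ^ 2 * sin Θ₁ ^ 2 + r₁ ^ 2 * r₃ ^ 2 * sin Θ₂ ^ 2) +
      4 * (r₁ ^ 2 * r₂ ^ 2 * sin Θ₃ ^ 2 + 2 * r₁ * r₂ * r₃ ^ 2 * cos Θ₃) +
      8 * r₁ * r₂ * r₃ * (r₃ * cos Θ₁ * cos Θ₂ + r₂ * (cos Θ₂ + cos Θ₁ * cos Θ₃) +
        r₁ * (cos Θ₁ + cos Θ₂ * cos Θ₃)) := by positivity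
  rw [← sub_pos]
  convert hpos using 1
  unfold circleEdgeLengthSq
  rw [sin_sq, sin_sq, sin_sq]
  ring

theorem circleAngle_deriv_numerator_pos (hr₁ : 0 < r₁) (hr₂ : 0 < r₂) (hr₃ : 0 < r₃)
    (hΘ₁ : 0 ≤ cos Θ₁) (hΘ₂ : 0 ≤ cos Θ₂) (hΘ₃ : 0 ≤ cos Θ₃) :
    0 < (2 * r₁ + 2 * r₃ * cos Θ₂) * circleEdgeLengthSq r₁ r₂ Θ₃ *
          (circleEdgeLengthSq r₁ r₃ Θ₂ - circleEdgeLengthSq r₁ r₂ Θ₃ +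
            circleEdgeLengthSq r₂ r₃ Θ₁) +
        circleEdgeLengthSq r₁ r₃ Θ₂ * (2 * r₁ + 2 * r₂ * cos Θ₃) *
          (circleEdgeLengthSq r₁ r₂ Θ₃ - circleEdgeLengthSq r₁ r₃ Θ₂ +
            circleEdgeLengthSq r₂ r₃ Θ₁) := by
  have hpos : 0 < 4 * r₁ ^ 3 * (r₃ ^ 2 * sin Θ₂ ^ 2 + r₂ ^ 2 * sin Θ₃ ^ 2) +
      8 * r₁ * r₂ ^ 2 * r₃ ^ 2 +
      4 * r₂ ^ 2 * r₃ ^ 2 * (r₃ * (cos Θ₂ + cos Θ₁ * cos Θ₃) + r₂ * (cos Θ₃ + cos Θ₁ * cos Θ₂)) +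
      4 * r₁ * r₂ * r₃ * (r₂ ^ 2 + r₃ ^ 2) * (cos Θ₁ + cos Θ₂ * cos Θ₃) +
      4 * r₁ * r₂ ^ 2 * r₃ ^ 2 * (cos Θ₂ ^ 2 + cos Θ₃ ^ 2 + 4 * cos Θ₁ * cos Θ₂ * cos Θ₃) +
      12 * r₁ ^ 2 * r₂ * r₃ * (r₃ * (cos Θ₃ + cos Θ₁ * cos Θ₂) + r₂ * (cos Θ₂ + cos Θ₁ * cos Θ₃)) +
      8 * r₁ ^ 3 * r₂ * r₃ * (cos Θ₁ + cos Θ₂ * cos Θ₃) := by positivity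
  convert hpos using 1
  unfold circleEdgeLengthSq
  -- the negative monomials `-4 r₁³ rⱼ² cos² Θₖ` of the expansion pair off into sine squares
  rw [sin_sq, sin_sq]
  ring

end CirclePackingTriangle

theorem circleAngle_deriv_self_neg
    (r₁ r₂ r₃ Θ₁ Θ₂ Θ₃ : ℝ)
    (hr₁ : 0 < r₁) (hr₂ : 0 < r₂) (hr₃ : 0 < r₃)
    (hΘ₁ : Θ₁ ∈ Set.Icc 0 (π / 2)) (hΘ₂ : Θ₂ ∈ Set.Icc 0 (π / 2))
    (hΘ₃ : Θ₃ ∈ Set.Icc 0 (π / 2)) :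
    deriv (fun s => circleAngle Θ₁ Θ₂ Θ₃ s r₂ r₃) r₁ < 0 := by
  have hcos : ∀ Θ ∈ Icc 0 (π / 2), 0 ≤ cos Θ := fun Θ hΘ =>
    cos_nonneg_of_mem_Icc ⟨by linarith [pi_pos, hΘ.1], hΘ.2⟩
  have hc₁ := hcos Θ₁ hΘ₁
  have hc₂ := hcos Θ₂ hΘ₂
  have hc₃ := hcos Θ₃ hΘ₃
  have hangle : (fun s => circleAngle Θ₁ Θ₂ Θ₃ s r₂ r₃) = fun s =>
      arccos ((circleEdgeLengthSq s r₃ Θ₂ + circleEdgeLengthSq s r₂ Θ₃ -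
          circleEdgeLengthSq r₂ r₃ Θ₁) /
        (2 * √(circleEdgeLengthSq s r₃ Θ₂) * √(circleEdgeLengthSq s r₂ Θ₃))) := by
    funext s
    simp only [circleAngle, sq_circleEdgeLength]
    rfl
  rw [hangle]
  exact deriv_arccos_lawOfCosines_neg _ (hasDerivAt_circleEdgeLengthSq r₁ r₃ Θ₂)
    (hasDerivAt_circleEdgeLengthSq r₁ r₂ Θ₃)
    (circleEdgeLengthSq_pos hr₁ hr₃ (by linarith)) (circleEdgeLengthSq_pos hr₁ hr₂ (by linarith))
    (circleAngle_deriv_numerator_pos hr₁ hr₂ hr₃ hc₁ hc₂ hc₃)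
    (circleEdgeLengthSq_add_sub_sq_lt hr₁ hr₂ hr₃ hc₁ hc₂ hc₃)
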